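/- For every nonnegative integer n, the quantity F_n := -Σ_{t=1}^{∞} R_n'(t), where R_n(t) = (((t-1)···(t-n))/(t(t+1)···(t+n)))^2, can be written as F_n = u_n ζ(3) - v_n with u_n an integer and D_n^3 · v_n an integer, where D_n = lcm(1,...,n). -/

import Mathlib

noncomputable def R (n : ℕ) (t : ℝ) : ℝ :=
  ((∏ j ∈ Finset.Icc 1 n, (t - j)) / (∏ j ∈ Finset.range (n + 1), (t + j))) ^ 2

def D (n : ℕ) : ℕ := (Finset.Icc 1 n).lcm id

noncomputable def F (n : ℕ) : ℝ := -∑' t : ℕ, deriv (R n) (t + 1)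

noncomputable def zeta3 : ℝ := ∑' k : ℕ, 1 / ((k : ℝ) + 1) ^ 3

open Finset Polynomial Nat

def ee (n k : ℕ) : ℤ := (-1)^(n+k) * ((n+k).choose k * n.choose k)

lemma fact_prod_Icc (n k : ℕ) : k ! * ∏ j ∈ Icc 1 n, (k + j) = (n + k)! := by
  induction n with
  | zero => simp
  | succ n ih =>
    rw [Finset.prod_Icc_succ_top (by omega)]
    rw [show k ! * ((∏ j ∈ Icc 1 n, (k + j)) * (k + (n+1))) =
      (k ! * ∏ j ∈ Icc 1 n, (k + j)) * (k + (n+1)) by ring, ih,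
      show n + 1 + k = (n + k) + 1 by omega, Nat.factorial_succ]
    ring

lemma prod_range_sub_cast (k : ℕ) :
    ∏ j ∈ range k, ((j : ℝ) - k) = (-1)^k * k ! := by
  have h : ∀ j ∈ range k, ((j : ℝ) - k) = -(((k - j : ℕ) : ℝ)) := by
    intro j hj
    have hjk : j ≤ k := (mem_range.1 hj).le
    push_cast [Nat.cast_sub hjk]
    ring
  rw [Finset.prod_congr rfl h,
    Finset.prod_congr rfl (fun j _ => (neg_eq_neg_one_mul (((k - j : ℕ) : ℝ)))),
    Finset.prod_mul_distrib, Finset.prod_const, Finset.card_range]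
  congr 1
  rw [← Nat.cast_prod]
  norm_cast
  rw [← Finset.prod_range_add_one_eq_factorial k]
  apply Finset.prod_nbij' (fun j => k - 1 - j) (fun j => k - 1 - j) <;>
    intro a ha <;> simp_all [Finset.mem_range] <;> omega

lemma prod_Ico_sub_cast (n k : ℕ) (hk : k ≤ n) :
    ∏ j ∈ Ico (k+1) (n+1), ((j : ℝ) - k) = (n - k)! := by
  rw [Finset.prod_Ico_eq_prod_range]
  have h : ∀ j ∈ range (n + 1 - (k+1)), ((k + 1 + j : ℕ) : ℝ) - k = ((j + 1 : ℕ) : ℝ) := by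
    intro j _; push_cast; ring
  rw [Finset.prod_congr rfl h, ← Nat.cast_prod, Finset.prod_range_add_one_eq_factorial]
  congr 2
  omega

lemma erase_range_eq (n k : ℕ) (hk : k ∈ range (n+1)) :
    (range (n+1)).erase k = range k ∪ Ico (k+1) (n+1) := by
  have hkn := mem_range.1 hk
  ext j
  simp only [mem_erase, mem_range, mem_union, mem_Ico]
  omega

lemma prod_erase_sub_cast (n k : ℕ) (hk : k ∈ range (n+1)) :
    ∏ j ∈ (range (n+1)).erase k, ((j : ℝ) - k) = (-1)^k * k ! * (n - k)! := by
  rw [erase_range_eq n k hk, Finset.prod_union (by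
    simp only [Finset.disjoint_left, mem_range, mem_Ico]; omega),
    prod_range_sub_cast, prod_Ico_sub_cast n k (Nat.lt_succ_iff.mp (mem_range.1 hk))]

lemma eval_key (n k : ℕ) (hk : k ∈ range (n+1)) :
    ∏ j ∈ Icc 1 n, (-(k:ℝ) - j) = (ee n k : ℝ) * ∏ j ∈ (range (n+1)).erase k, ((j : ℝ) - k) := by
  have hkn : k ≤ n := Nat.lt_succ_iff.mp (mem_range.1 hk)
  rw [prod_erase_sub_cast n k hk]
  have h : ∀ j ∈ Icc 1 n, (-(k:ℝ) - j) = (-1) * ((k + j : ℕ) : ℝ) := by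
    intro j _; push_cast; ring
  rw [Finset.prod_congr rfl h, Finset.prod_mul_distrib, Finset.prod_const, Nat.card_Icc,
    ← Nat.cast_prod]
  have h1 : n.choose k * k ! * (n-k)! = n ! := Nat.choose_mul_factorial_mul_factorial hkn
  have h2 : (n+k).choose k * k ! * n ! = (n+k)! := by
    have := Nat.choose_mul_factorial_mul_factorial (show k ≤ n + k by omega)
    rwa [Nat.add_sub_cancel] at this
  have hh : (n+k)! = (n+k).choose k * n.choose k * (n-k)! * k ! * k ! := by
    rw [← h2, ← h1]; ring
  have hfact : (∏ j ∈ Icc 1 n, (k + j)) * k ! = (n+k)! := by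
    rw [mul_comm]; exact fact_prod_Icc n k
  have hP : ((∏ j ∈ Icc 1 n, (k + j) : ℕ) : ℝ) = ((n+k)! : ℝ) / (k ! : ℝ) := by
    rw [eq_div_iff (by positivity : (k ! : ℝ) ≠ 0)]
    exact_mod_cast congrArg (Nat.cast : ℕ → ℝ) hfact
  rw [show n + 1 - 1 = n from rfl, hP, ee]
  push_cast
  have hhR : (((n+k)! : ℕ) : ℝ) = ((n+k).choose k : ℝ) * (n.choose k : ℝ) * ((n-k)! : ℝ) * (k ! : ℝ) * (k ! : ℝ) := by
    exact_mod_cast congrArg (Nat.cast : ℕ → ℝ) hh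
  rw [hhR, show ((-1:ℝ))^(n+k) = (-1)^n * (-1)^k by rw [pow_add]]
  have hk0 : (k ! : ℝ) ≠ 0 := by positivity
  field_simp
  ring_nf
  rw [show ((-1:ℝ))^(k*2) = ((-1)^2)^k by rw [← pow_mul, mul_comm], neg_one_sq, one_pow]
  ring

lemma poly_id (n : ℕ) :
    (∏ j ∈ Icc 1 n, (X - C ((j : ℕ) : ℝ))) =
      ∑ k ∈ range (n+1), C (ee n k : ℝ) * ∏ j ∈ (range (n+1)).erase k, (X + C ((j : ℕ) : ℝ)) := by
  rw [← sub_eq_zero]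
  apply Polynomial.eq_zero_of_natDegree_lt_card_of_eval_eq_zero' _
    ((range (n+1)).image (fun k : ℕ => -(k : ℝ)))
  · intro x hx
    obtain ⟨k, hk, rfl⟩ := Finset.mem_image.1 hx
    simp only [eval_sub, eval_prod, eval_finset_sum, eval_mul, eval_C, eval_add, eval_X]
    rw [sub_eq_zero, Finset.sum_eq_single k]
    · rw [eval_key n k hk]
      congr 1
      exact Finset.prod_congr rfl (fun j _ => by ring)
    · intro k' hk' hne
      have hkmem : k ∈ (range (n+1)).erase k' := Finset.mem_erase.2 ⟨Ne.symm hne, hk⟩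
      rw [Finset.prod_eq_zero hkmem (by ring), mul_zero]
    · intro h; exact absurd hk h
  · have hA : (∏ j ∈ Icc 1 n, (X - C ((j : ℕ) : ℝ))).natDegree ≤ n := by
      refine le_trans (Polynomial.natDegree_prod_le _ _) ?_
      refine le_trans (Finset.sum_le_card_nsmul _ _ 1 (fun j _ => ?_)) (by simp [Nat.card_Icc])
      exact le_of_eq (Polynomial.natDegree_X_sub_C _)
    have hB : (∑ k ∈ range (n+1), C (ee n k : ℝ) *
        ∏ j ∈ (range (n+1)).erase k, (X + C ((j : ℕ) : ℝ))).natDegree ≤ n := by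
      refine Polynomial.natDegree_sum_le_of_forall_le _ _ (fun k hk => ?_)
      refine le_trans (Polynomial.natDegree_C_mul_le _ _) ?_
      refine le_trans (Polynomial.natDegree_prod_le _ _) ?_
      refine le_trans (Finset.sum_le_card_nsmul _ _ 1 (fun j _ => ?_)) ?_
      · exact le_of_eq (Polynomial.natDegree_X_add_C _)
      · simp [Finset.card_erase_of_mem hk]
    have hcard : ((range (n+1)).image (fun k : ℕ => -(k : ℝ))).card = n + 1 := by
      rw [Finset.card_image_of_injective _ (fun a b hab => by
        exact Nat.cast_injective (neg_injective hab))]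
      simp
    rw [hcard]
    exact lt_of_le_of_lt (Polynomial.natDegree_sub_le _ _) (by omega)

lemma P_eq (n : ℕ) (t : ℝ) (ht : 0 < t) :
    (∏ j ∈ Icc 1 n, (t - j)) / (∏ j ∈ range (n+1), (t + j)) =
      ∑ k ∈ range (n+1), (ee n k : ℝ) / (t + k) := by
  have hden : ∀ j ∈ range (n+1), t + (j : ℝ) ≠ 0 := fun j _ => by positivity
  have hprod : (∏ j ∈ range (n+1), (t + (j:ℝ))) ≠ 0 :=
    Finset.prod_ne_zero_iff.2 hden
  rw [div_eq_iff hprod, Finset.sum_mul]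
  have hterm : ∀ k ∈ range (n+1), ((ee n k : ℝ) / (t + k)) * (∏ j ∈ range (n+1), (t + (j:ℝ)))
      = (ee n k : ℝ) * ∏ j ∈ (range (n+1)).erase k, (t + (j:ℝ)) := by
    intro k hk
    rw [← Finset.mul_prod_erase _ _ hk]
    field_simp
  rw [Finset.sum_congr rfl hterm]
  have h := congrArg (eval t) (poly_id n)
  simpa only [eval_prod, eval_finset_sum, eval_mul, eval_C, eval_add, eval_X, eval_sub] using h

noncomputable def aa (n k : ℕ) : ℝ :=
  ∑ l ∈ Finset.range (n+1), 2 * (ee n k : ℝ) * (ee n l : ℝ) / ((l : ℝ) - (k : ℝ))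

lemma R_eq (n : ℕ) (t : ℝ) (ht : 0 < t) :
    R n t = ∑ k ∈ range (n+1), ((ee n k : ℝ)^2 / (t + k)^2 + aa n k / (t + k)) := by
  have hden : ∀ k : ℕ, t + (k : ℝ) ≠ 0 := fun k => by positivity
  have hcast : ∀ k l : ℕ, k ≠ l → ((l : ℝ) - (k : ℝ)) ≠ 0 := by
    intro k l hne
    simp only [sub_ne_zero]
    exact fun h => hne (Nat.cast_injective h.symm)
  set g : ℕ → ℕ → ℝ := fun k l =>
    (ee n k : ℝ) * (ee n l : ℝ) / (((l : ℝ) - (k : ℝ)) * (t + k)) with hg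
  have key : ∀ k ∈ range (n+1), ∀ l ∈ range (n+1), k ≠ l →
      ((ee n k : ℝ) / (t + k)) * ((ee n l : ℝ) / (t + l)) = g k l + g l k := by
    intro k _ l _ hne
    rw [hg]
    have h1 := hden k
    have h2 := hden l
    have h3 := hcast k l hne
    have h4 := hcast l k (Ne.symm hne)
    field_simp
    ring
  have hR : R n t = (∑ k ∈ range (n+1), (ee n k : ℝ) / (t + k))^2 := by
    rw [R, P_eq n t ht]
  rw [hR, sq, Finset.sum_mul_sum]
  have hsplit : ∀ k ∈ range (n+1),
      ∑ l ∈ range (n+1), ((ee n k : ℝ) / (t + k)) * ((ee n l : ℝ) / (t + l))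
        = (ee n k : ℝ)^2 / (t + k)^2 + ∑ l ∈ (range (n+1)).erase k, (g k l + g l k) := by
    intro k hk
    rw [← Finset.add_sum_erase _ _ hk]
    congr 1
    · rw [_root_.div_mul_div_comm, ← sq, ← sq]
    · exact Finset.sum_congr rfl fun l hl =>
        key k hk l (Finset.mem_of_mem_erase hl) (Ne.symm (Finset.ne_of_mem_erase hl))
  rw [Finset.sum_congr rfl hsplit, Finset.sum_add_distrib]
  conv_rhs => rw [Finset.sum_add_distrib]
  congr 1
  have hdiag : ∀ k, g k k = 0 := by
    intro k; rw [hg]; simp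
  have h1 : ∀ k ∈ range (n+1), ∑ l ∈ (range (n+1)).erase k, (g k l + g l k)
      = (∑ l ∈ range (n+1), g k l) + (∑ l ∈ range (n+1), g l k) := by
    intro k hk
    rw [Finset.sum_add_distrib]
    congr 1
    · exact Finset.sum_erase _ (hdiag k)
    · exact Finset.sum_erase _ (hdiag k)
  rw [Finset.sum_congr rfl h1, Finset.sum_add_distrib]
  rw [Finset.sum_comm (s := range (n+1)) (t := range (n+1)) (f := fun k l => g l k)]
  rw [← two_mul, Finset.mul_sum]
  refine Finset.sum_congr rfl fun k _ => ?_
  rw [aa, Finset.sum_div, Finset.mul_sum]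
  refine Finset.sum_congr rfl fun l _ => ?_
  rw [hg, div_div]
  ring

lemma aa_sum_zero (n : ℕ) : ∑ k ∈ range (n+1), aa n k = 0 := by
  have hanti : ∀ k l : ℕ, (2 : ℝ) * (ee n l : ℝ) * (ee n k : ℝ) / ((k : ℝ) - (l : ℝ))
      = -(2 * (ee n k : ℝ) * (ee n l : ℝ) / ((l : ℝ) - (k : ℝ))) := by
    intro k l
    rw [show (k : ℝ) - (l : ℝ) = -((l : ℝ) - (k : ℝ)) by ring, div_neg]
    ring_nf
  have h : ∑ k ∈ range (n+1), aa n k = -∑ k ∈ range (n+1), aa n k := by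
    conv_lhs => rw [show (∑ k ∈ range (n+1), aa n k)
      = ∑ k ∈ range (n+1), ∑ l ∈ range (n+1),
          2 * (ee n k : ℝ) * (ee n l : ℝ) / ((l : ℝ) - (k : ℝ)) from rfl]
    rw [Finset.sum_comm]
    rw [Finset.sum_congr rfl fun y _ => Finset.sum_congr rfl fun x _ => hanti y x]
    simp only [Finset.sum_neg_distrib]
    simp only [aa]
  linarith

lemma dvd_D (n m : ℕ) (h1 : 1 ≤ m) (h2 : m ≤ n) : m ∣ D n :=
  Finset.dvd_lcm (mem_Icc.2 ⟨h1, h2⟩)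

lemma Daa_int (n k : ℕ) (hk : k ∈ range (n+1)) : ∃ z : ℤ, (D n : ℝ) * aa n k = z := by
  have hkn : k ≤ n := Nat.lt_succ_iff.mp (mem_range.1 hk)
  refine ⟨∑ l ∈ range (n+1), 2 * ee n k * ee n l * ((D n : ℤ) / ((l : ℤ) - (k : ℤ))), ?_⟩
  rw [aa, Finset.mul_sum, Int.cast_sum]
  refine Finset.sum_congr rfl fun l hl => ?_
  have hln : l ≤ n := Nat.lt_succ_iff.mp (mem_range.1 hl)
  by_cases hlk : l = k
  · subst hlk
    simp
  · have hdvd : ((l : ℤ) - (k : ℤ)) ∣ (D n : ℤ) := by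
      rw [← Int.natAbs_dvd]
      have habs : ((l : ℤ) - (k : ℤ)).natAbs ∣ D n := by
        apply dvd_D n _ _ _
        · omega
        · omega
      exact_mod_cast Int.natCast_dvd_natCast.2 habs
    push_cast [Int.cast_div_charZero hdvd]
    have hne : ((l : ℝ) - (k : ℝ)) ≠ 0 := by
      simp only [sub_ne_zero]
      exact fun h => hlk (Nat.cast_injective h)
    field_simp

noncomputable def S2 (k : ℕ) : ℝ := ∑ i ∈ Finset.range k, 1 / ((i : ℝ) + 1) ^ 2
noncomputable def S3 (k : ℕ) : ℝ := ∑ i ∈ Finset.range k, 1 / ((i : ℝ) + 1) ^ 3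

lemma DS_int (n k : ℕ) (hkn : k ≤ n) (p : ℕ) :
    ∃ z : ℤ, (D n : ℝ) ^ p * (∑ i ∈ Finset.range k, 1 / ((i : ℝ) + 1) ^ p) = z := by
  refine ⟨∑ i ∈ range k, ((D n : ℤ) / ((i : ℤ) + 1)) ^ p, ?_⟩
  rw [Finset.mul_sum, Int.cast_sum]
  refine Finset.sum_congr rfl fun i hi => ?_
  have hin : i + 1 ≤ n := by
    have := mem_range.1 hi; omega
  have hdvd : ((i : ℤ) + 1) ∣ (D n : ℤ) := by
    have : (i + 1 : ℕ) ∣ D n := dvd_D n (i+1) (by omega) hin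
    exact_mod_cast Int.natCast_dvd_natCast.2 this
  push_cast [Int.cast_div_charZero hdvd]
  have hne : ((i : ℝ) + 1) ≠ 0 := by positivity
  rw [div_pow]
  field_simp

lemma deriv_R (n : ℕ) (x : ℝ) (hx : 0 < x) :
    deriv (R n) x
      = ∑ k ∈ range (n+1), (-2 * (ee n k : ℝ)^2 / (x + k)^3 - aa n k / (x + k)^2) := by
  have hEq : (R n) =ᶠ[nhds x] (fun t => ∑ k ∈ range (n+1),
      ((ee n k : ℝ)^2 * ((t + k)^2)⁻¹ + aa n k * (t + k)⁻¹)) := by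
    filter_upwards [IsOpen.mem_nhds isOpen_Ioi hx] with t ht
    rw [R_eq n t ht]
    exact Finset.sum_congr rfl fun k _ => by rw [div_eq_mul_inv, div_eq_mul_inv]
  rw [Filter.EventuallyEq.deriv_eq hEq]
  have hder : HasDerivAt (fun t : ℝ => ∑ k ∈ range (n+1),
      ((ee n k : ℝ)^2 * ((t + (k:ℝ))^2)⁻¹ + aa n k * (t + (k:ℝ))⁻¹))
      (∑ k ∈ range (n+1),
        ((ee n k : ℝ)^2 * (-(2 * (x + (k:ℝ))^1 * 1) / ((x + (k:ℝ))^2)^2)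
          + aa n k * (-1 / (x + (k:ℝ))^2))) x := by
    apply HasDerivAt.fun_sum
    intro k _
    have hne : x + (k : ℝ) ≠ 0 := by positivity
    have h1 : HasDerivAt (fun t : ℝ => t + (k : ℝ)) 1 x := (hasDerivAt_id x).add_const _
    have hpow : HasDerivAt (fun t : ℝ => (t + (k : ℝ))^2) (2 * (x + k)^1 * 1) x := h1.pow 2
    have hinv2 := (hpow.inv (pow_ne_zero 2 hne)).const_mul ((ee n k : ℝ)^2)
    have hinv1 := (h1.inv hne).const_mul (aa n k)
    exact hinv2.add hinv1
  rw [hder.deriv]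
  refine Finset.sum_congr rfl fun k _ => ?_
  have hne : x + (k : ℝ) ≠ 0 := by positivity
  field_simp
  ring

noncomputable def zeta2 : ℝ := ∑' k : ℕ, 1 / ((k : ℝ) + 1) ^ 2

lemma summable_base (p : ℕ) (hp : 1 < p) : Summable (fun i : ℕ => 1 / ((i : ℝ) + 1) ^ p) := by
  have h := Real.summable_one_div_nat_pow.2 hp
  have h1 := (summable_nat_add_iff 1).2 h
  refine h1.congr fun i => ?_
  push_cast
  ring
lemma summable_shift (p k : ℕ) (hp : 1 < p) :
    Summable (fun t : ℕ => 1 / ((t : ℝ) + 1 + k) ^ p) := by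
  have h := (summable_nat_add_iff k).2 (summable_base p hp)
  refine h.congr fun i => ?_
  push_cast
  ring_nf

lemma tsum_shift (p k : ℕ) (hp : 1 < p) :
    ∑' t : ℕ, 1 / ((t : ℝ) + 1 + k) ^ p
      = (∑' i : ℕ, 1 / ((i : ℝ) + 1) ^ p) - ∑ i ∈ range k, 1 / ((i : ℝ) + 1) ^ p := by
  have hf := summable_base p hp
  have h := hf.sum_add_tsum_nat_add k
  have hcongr : ∑' t : ℕ, 1 / ((t : ℝ) + 1 + k) ^ p
      = ∑' t : ℕ, 1 / (((t + k : ℕ) : ℝ) + 1) ^ p := by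
    refine tsum_congr fun t => ?_
    push_cast
    ring_nf
  rw [hcongr, ← h]
  ring

lemma exists_int_sum {s : Finset ℕ} {f : ℕ → ℝ} (h : ∀ k ∈ s, ∃ z : ℤ, f k = z) :
    ∃ z : ℤ, ∑ k ∈ s, f k = z := by
  classical
  induction s using Finset.induction with
  | empty => exact ⟨0, by simp⟩
  | @insert a s' hx ih =>
    obtain ⟨z1, hz1⟩ := h a (Finset.mem_insert_self a s')
    obtain ⟨z2, hz2⟩ := ih fun k hk => h k (Finset.mem_insert_of_mem hk)
    exact ⟨z1 + z2, by rw [Finset.sum_insert hx, hz1, hz2]; push_cast; ring⟩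

theorem F_linear_form (n : ℕ) :
    ∃ u v : ℝ, (∃ a : ℤ, u = a) ∧ (∃ b : ℤ, (D n : ℝ) ^ 3 * v = b) ∧
      F n = u * zeta3 - v := by
  refine ⟨∑ k ∈ range (n+1), 2 * (ee n k : ℝ)^2,
    ∑ k ∈ range (n+1), (aa n k * S2 k + 2 * (ee n k : ℝ)^2 * S3 k), ?_, ?_, ?_⟩
  · exact ⟨∑ k ∈ range (n+1), 2 * (ee n k)^2, by push_cast; ring⟩
  · rw [Finset.mul_sum]
    apply exists_int_sum
    intro k hk
    have hkn : k ≤ n := Nat.lt_succ_iff.mp (mem_range.1 hk)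
    obtain ⟨z1, hz1⟩ := Daa_int n k hk
    obtain ⟨z2, hz2⟩ := DS_int n k hkn 2
    obtain ⟨z3, hz3⟩ := DS_int n k hkn 3
    refine ⟨z1 * z2 + 2 * (ee n k)^2 * z3, ?_⟩
    have : (D n : ℝ)^3 * (aa n k * S2 k + 2 * (ee n k : ℝ)^2 * S3 k)
        = ((D n : ℝ) * aa n k) * ((D n : ℝ)^2 * S2 k)
          + 2 * (ee n k : ℝ)^2 * ((D n : ℝ)^3 * S3 k) := by ring
    rw [this, hz1, S2, hz2, S3, hz3]
    push_cast
    ring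
  · have hpt : ∀ t : ℕ, -(deriv (R n) ((t : ℝ) + 1))
        = ∑ k ∈ range (n+1), (2 * (ee n k : ℝ)^2 * (1 / ((t : ℝ) + 1 + k)^3)
            + aa n k * (1 / ((t : ℝ) + 1 + k)^2)) := by
      intro t
      rw [deriv_R n ((t : ℝ) + 1) (by positivity), ← Finset.sum_neg_distrib]
      refine Finset.sum_congr rfl fun k _ => ?_
      have hne : ((t : ℝ) + 1 + (k : ℝ)) ≠ 0 := by positivity
      field_simp
      ring
    have hsum3 : ∀ k : ℕ, Summable (fun t : ℕ => 2 * (ee n k : ℝ)^2 * (1 / ((t : ℝ) + 1 + k)^3)) :=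
      fun k => (summable_shift 3 k (by norm_num)).mul_left _
    have hsum2 : ∀ k : ℕ, Summable (fun t : ℕ => aa n k * (1 / ((t : ℝ) + 1 + k)^2)) :=
      fun k => (summable_shift 2 k (by norm_num)).mul_left _
    have hF : F n = ∑' t : ℕ, ∑ k ∈ range (n+1),
        (2 * (ee n k : ℝ)^2 * (1 / ((t : ℝ) + 1 + k)^3)
          + aa n k * (1 / ((t : ℝ) + 1 + k)^2)) := by
      rw [F, ← tsum_neg]
      exact tsum_congr hpt
    rw [hF, Summable.tsum_finsetSum (fun k _ => (hsum3 k).add (hsum2 k))]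
    have hterm : ∀ k ∈ range (n+1),
        (∑' t : ℕ, (2 * (ee n k : ℝ)^2 * (1 / ((t : ℝ) + 1 + k)^3)
          + aa n k * (1 / ((t : ℝ) + 1 + k)^2)))
        = 2 * (ee n k : ℝ)^2 * (zeta3 - S3 k) + aa n k * (zeta2 - S2 k) := by
      intro k _
      rw [Summable.tsum_add (hsum3 k) (hsum2 k), tsum_mul_left, tsum_mul_left,
        tsum_shift 3 k (by norm_num), tsum_shift 2 k (by norm_num)]
      rfl
    rw [Finset.sum_congr rfl hterm]
    have expand : ∀ k ∈ range (n+1),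
        2 * (ee n k : ℝ)^2 * (zeta3 - S3 k) + aa n k * (zeta2 - S2 k)
          = 2 * (ee n k : ℝ)^2 * zeta3 - (aa n k * S2 k + 2 * (ee n k : ℝ)^2 * S3 k)
            + aa n k * zeta2 := fun k _ => by ring
    rw [Finset.sum_congr rfl expand, Finset.sum_add_distrib, Finset.sum_sub_distrib,
      ← Finset.sum_mul, ← Finset.sum_mul, aa_sum_zero n]
    ring
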